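/- The function Λ(x,y) = (x²+y²) tanh(cos(m·arg(x,y)) / (x²+y²)^{a/2}) (i.e. Λ = r² tanh(r^{−a} cos mθ) in polar coordinates), extended by Λ(0,0) = 0, is C¹ on ℝ² for any 0 < a < 1 and positive integer m; that is, Λ is differentiable at the origin with vanishing gradient and its partial derivatives are continuous at the origin. -/

import Mathlib

open Real

/-- `Λ(x,y) = (x²+y²) tanh(cos(m arg(x,y))/(x²+y²)^{a/2})` extended by `Λ(0,0) = 0`,
i.e. `Λ = r² tanh(r^{-a} cos mθ)` in polar coordinates. -/
noncomputable def LamE (a : ℝ) (m : ℕ) (p : ℝ × ℝ) : ℝ :=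
  if p = 0 then 0
  else (p.1 ^ 2 + p.2 ^ 2) *
    Real.tanh (Real.cos (m * Complex.arg (p.1 + p.2 * Complex.I))
      / (p.1 ^ 2 + p.2 ^ 2) ^ (a / 2))

/-!
Identify `ℝ²` with `ℂ`. Off the origin `cos (m arg z) / |z|^a = Re (z^m) |z|^(-(m+a)) =: u z`, which,
unlike `arg`, is smooth on `ℂ \ {0}`, with `|z| ‖Du z‖ ≤ (2m + a) |z|^(-a)`. Since `|tanh| ≤ 1` and
`|tanh'| ≤ 1`, `Λ z = |z|² tanh (u z)` satisfies `|Λ z| ≤ |z|²`, so `DΛ 0 = 0`, and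
`‖DΛ z‖ ≤ 2|z| + |z|² ‖Du z‖ = O(|z| + |z|^(1-a)) → 0` because `a < 1`.
-/

open Filter Topology Asymptotics

namespace Real

theorem hasDerivAt_tanh (x : ℝ) : HasDerivAt tanh (cosh x ^ 2)⁻¹ x := by
  have h := (hasDerivAt_sinh x).div (hasDerivAt_cosh x) (cosh_pos x).ne'
  rw [show sinh / cosh = tanh from funext fun y => (tanh_eq_sinh_div_cosh y).symm] at h
  rwa [← sq, ← sq, cosh_sq_sub_sinh_sq, one_div] at h

theorem contDiff_tanh {n : WithTop ℕ∞} : ContDiff ℝ n tanh := by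
  rw [show tanh = fun y => sinh y / cosh y from funext tanh_eq_sinh_div_cosh]
  exact contDiff_sinh.div contDiff_cosh fun x => (cosh_pos x).ne'

theorem abs_deriv_tanh_le_one (x : ℝ) : |(cosh x ^ 2)⁻¹| ≤ 1 := by
  rw [abs_inv, inv_le_one₀ (by positivity), abs_of_nonneg (by positivity)]
  nlinarith [one_le_cosh x]

end Real

section FDerivBounds

variable {E : Type*} [NormedAddCommGroup E] [NormedSpace ℝ E] {f g : E → ℝ} {x : E}

theorem norm_fderiv_mul_le (hf : DifferentiableAt ℝ f x) (hg : DifferentiableAt ℝ g x) :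
    ‖fderiv ℝ (fun y => f y * g y) x‖ ≤ |f x| * ‖fderiv ℝ g x‖ + |g x| * ‖fderiv ℝ f x‖ := by
  rw [fderiv_fun_mul hf hg]
  refine (norm_add_le _ _).trans ?_
  rw [norm_smul, norm_smul, norm_eq_abs, norm_eq_abs]

theorem norm_fderiv_tanh_comp_le (hf : DifferentiableAt ℝ f x) :
    ‖fderiv ℝ (fun y => tanh (f y)) x‖ ≤ ‖fderiv ℝ f x‖ := by
  rw [HasFDerivAt.fderiv (f := fun y => tanh (f y))
    ((hasDerivAt_tanh (f x)).comp_hasFDerivAt x hf.hasFDerivAt), norm_smul, norm_eq_abs]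
  exact mul_le_of_le_one_left (norm_nonneg _) (abs_deriv_tanh_le_one _)

end FDerivBounds

section InnerProductSpace

variable {E : Type*} [NormedAddCommGroup E] [InnerProductSpace ℝ E] {u : E → ℝ}

theorem hasFDerivAt_norm_sq_mul_tanh_zero (u : E → ℝ) :
    HasFDerivAt (fun x => ‖x‖ ^ 2 * tanh (u x)) (0 : E →L[ℝ] ℝ) 0 := by
  refine .of_isLittleO ?_
  simp only [norm_zero, sub_zero, ne_eq, OfNat.ofNat_ne_zero, not_false_eq_true, zero_pow,
    zero_mul, zero_apply]
  refine (IsBigO.of_bound 1 (.of_forall fun x => ?_)).trans_isLittleO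
    (isLittleO_norm_pow_id one_lt_two)
  rw [one_mul, norm_mul, norm_eq_abs (tanh _)]
  exact mul_le_of_le_one_right (norm_nonneg _) (abs_tanh_lt_one _).le

theorem norm_fderiv_norm_sq_mul_tanh_le {x : E} (hu : DifferentiableAt ℝ u x) :
    ‖fderiv ℝ (fun x => ‖x‖ ^ 2 * tanh (u x)) x‖ ≤ ‖x‖ ^ 2 * ‖fderiv ℝ u x‖ + 2 * ‖x‖ := by
  have hsq : DifferentiableAt ℝ (fun x : E => ‖x‖ ^ 2) x :=
    (hasStrictFDerivAt_norm_sq x).hasFDerivAt.differentiableAt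
  have htanh : DifferentiableAt ℝ (fun x => tanh (u x)) x :=
    (contDiff_tanh.differentiable one_ne_zero (u x)).comp x hu
  refine (norm_fderiv_mul_le hsq htanh).trans ?_
  have hnorm : ‖(2 • innerSL ℝ x : E →L[ℝ] ℝ)‖ = 2 * ‖x‖ := by
    rw [← Nat.cast_smul_eq_nsmul ℝ, norm_smul, innerSL_apply_norm]; norm_num
  rw [fderiv_norm_sq_apply, hnorm, abs_of_nonneg (by positivity)]
  exact add_le_add (by gcongr; exact norm_fderiv_tanh_comp_le hu)
    (mul_le_of_le_one_left (by positivity) (abs_tanh_lt_one _).le)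

theorem contDiff_norm_sq_mul_tanh (hu : ContDiffOn ℝ 1 u {0}ᶜ)
    (hlim : Tendsto (fun x => ‖x‖ ^ 2 * ‖fderiv ℝ u x‖) (𝓝[≠] 0) (𝓝 0)) :
    ContDiff ℝ 1 (fun x => ‖x‖ ^ 2 * tanh (u x)) := by
  have hF : ContDiffOn ℝ 1 (fun x => ‖x‖ ^ 2 * tanh (u x)) {0}ᶜ :=
    (contDiff_norm_sq ℝ).contDiffOn.mul (contDiff_tanh.comp_contDiffOn hu)
  have hF0 := hasFDerivAt_norm_sq_mul_tanh_zero u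
  have hu' : ∀ x ≠ (0 : E), DifferentiableAt ℝ u x := fun x hx =>
    (hu.differentiableOn one_ne_zero).differentiableAt (isOpen_compl_singleton.mem_nhds hx)
  refine contDiff_one_iff_fderiv.2 ⟨fun x => ?_, continuous_iff_continuousAt.2 fun x => ?_⟩
  · rcases eq_or_ne x 0 with rfl | hx
    · exact hF0.differentiableAt
    · exact (hF.differentiableOn one_ne_zero).differentiableAt
        (isOpen_compl_singleton.mem_nhds hx)
  rcases eq_or_ne x 0 with rfl | hx
  · rw [← continuousWithinAt_compl_self, ContinuousWithinAt, hF0.fderiv]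
    have hnorm : Tendsto (fun x : E => 2 * ‖x‖) (𝓝[≠] 0) (𝓝 0) := by
      simpa using (tendsto_norm_zero.mono_left nhdsWithin_le_nhds).const_mul (2 : ℝ)
    refine squeeze_zero_norm' ?_ (by simpa using hlim.add hnorm)
    filter_upwards [self_mem_nhdsWithin] with x hx
    exact norm_fderiv_norm_sq_mul_tanh_le (hu' x hx)
  · exact (hF.continuousOn_fderiv_of_isOpen isOpen_compl_singleton le_rfl).continuousAt
      (isOpen_compl_singleton.mem_nhds hx)

theorem norm_fderiv_norm_rpow_le_of_ne_zero {x : E} (hx : x ≠ 0) (p : ℝ) :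
    ‖fderiv ℝ (fun x : E => ‖x‖ ^ p) x‖ ≤ |p| * ‖x‖ ^ (p - 1) := by
  have hnorm := ((contDiffAt_norm ℝ hx (n := 1)).differentiableAt one_ne_zero).hasFDerivAt
  rw [HasFDerivAt.fderiv (f := fun x : E => ‖x‖ ^ p) ((hasDerivAt_rpow_const
      (Or.inl (norm_ne_zero_iff.2 hx))).comp_hasFDerivAt x hnorm), norm_smul, norm_mul,
    norm_eq_abs p, norm_of_nonneg (by positivity)]
  exact mul_le_of_le_one_right (by positivity)
    (by simpa using norm_fderiv_le_of_lipschitz ℝ lipschitzWith_one_norm (x₀ := x))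

end InnerProductSpace

namespace Complex

theorem re_pow_eq_norm_pow_mul_cos (z : ℂ) (m : ℕ) :
    (z ^ m).re = ‖z‖ ^ m * Real.cos (m * arg z) := by
  conv_lhs => rw [← norm_mul_exp_arg_mul_I z, mul_pow, ← exp_nat_mul]
  rw [← ofReal_pow, show (m : ℂ) * (arg z * I) = ((m * arg z : ℝ) : ℂ) * I by push_cast; ring,
    re_ofReal_mul, exp_ofReal_mul_I_re]

theorem norm_mul_norm_fderiv_re_pow_le (z : ℂ) (m : ℕ) :
    ‖z‖ * ‖fderiv ℝ (fun z : ℂ => (z ^ m).re) z‖ ≤ m * ‖z‖ ^ m := by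
  have h : HasFDerivAt (fun z : ℂ => (z ^ m).re)
      (reCLM.comp ((ContinuousLinearMap.toSpanSingleton ℂ (m * z ^ (m - 1))).restrictScalars ℝ))
      z :=
    reCLM.hasFDerivAt.comp z ((hasDerivAt_pow m z).hasFDerivAt.restrictScalars ℝ)
  calc ‖z‖ * ‖fderiv ℝ (fun z : ℂ => (z ^ m).re) z‖ ≤ ‖z‖ * (m * ‖z‖ ^ (m - 1)) := by
        rw [h.fderiv]
        gcongr
        refine (reCLM.opNorm_comp_le _).trans ?_
        rw [reCLM_norm, one_mul, ContinuousLinearMap.norm_restrictScalars,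
          ContinuousLinearMap.norm_toSpanSingleton, norm_mul, norm_pow, norm_natCast]
    _ = m * ‖z‖ ^ m := by
        rcases m with _ | m
        · simp
        · rw [Nat.add_sub_cancel, pow_succ]; ring

noncomputable def homogeneousCos (m : ℕ) (s : ℝ) (z : ℂ) : ℝ := (z ^ m).re * ‖z‖ ^ s

theorem homogeneousCos_eq {z : ℂ} (hz : z ≠ 0) (m : ℕ) (s : ℝ) :
    homogeneousCos m s z = ‖z‖ ^ ((m : ℝ) + s) * Real.cos (m * arg z) := by
  rw [homogeneousCos, re_pow_eq_norm_pow_mul_cos, rpow_add (norm_pos_iff.2 hz), rpow_natCast]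
  ring

theorem contDiffOn_homogeneousCos {n : WithTop ℕ∞} (m : ℕ) (s : ℝ) :
    ContDiffOn ℝ n (homogeneousCos m s) {0}ᶜ := fun _ hz =>
  ((reCLM.contDiff.comp (contDiff_id.pow m)).contDiffAt.mul
    ((contDiffAt_norm ℝ hz).rpow_const_of_ne (norm_ne_zero_iff.2 hz))).contDiffWithinAt

theorem norm_mul_norm_fderiv_homogeneousCos_le {z : ℂ} (hz : z ≠ 0) (m : ℕ) (s : ℝ) :
    ‖z‖ * ‖fderiv ℝ (homogeneousCos m s) z‖ ≤ (m + |s|) * ‖z‖ ^ ((m : ℝ) + s) := by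
  have hr : 0 < ‖z‖ := norm_pos_iff.2 hz
  have hre : DifferentiableAt ℝ (fun z : ℂ => (z ^ m).re) z :=
    (reCLM.differentiable.comp (differentiable_id.pow m)) z
  have hrpow : DifferentiableAt ℝ (fun z : ℂ => ‖z‖ ^ s) z :=
    ((contDiffAt_norm ℝ hz (n := 1)).rpow_const_of_ne hr.ne').differentiableAt one_ne_zero
  have hprod : ‖fderiv ℝ (homogeneousCos m s) z‖ ≤ |(z ^ m).re| * ‖fderiv ℝ (‖·‖ ^ s) z‖
      + |‖z‖ ^ s| * ‖fderiv ℝ (fun z : ℂ => (z ^ m).re) z‖ :=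
    norm_fderiv_mul_le hre hrpow
  have hre_le : |(z ^ m).re| ≤ ‖z‖ ^ m := by simpa using abs_re_le_norm (z ^ m)
  calc ‖z‖ * ‖fderiv ℝ (homogeneousCos m s) z‖
      ≤ |(z ^ m).re| * (‖z‖ * ‖fderiv ℝ (fun z : ℂ => ‖z‖ ^ s) z‖)
        + ‖z‖ ^ s * (‖z‖ * ‖fderiv ℝ (fun z : ℂ => (z ^ m).re) z‖) := by
        rw [abs_of_pos (rpow_pos_of_pos hr s)] at hprod
        exact (mul_le_mul_of_nonneg_left hprod hr.le).trans_eq (by ring)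
    _ ≤ ‖z‖ ^ m * (‖z‖ * (|s| * ‖z‖ ^ (s - 1))) + ‖z‖ ^ s * (m * ‖z‖ ^ m) := by
        gcongr ?_ * (_ * ?_) + _ * ?_
        · exact norm_fderiv_norm_rpow_le_of_ne_zero hz s
        · exact norm_mul_norm_fderiv_re_pow_le z m
    _ = (m + |s|) * ‖z‖ ^ ((m : ℝ) + s) := by
        rw [rpow_add hr, rpow_natCast, rpow_sub_one hr.ne']
        field_simp
        ring

theorem tendsto_norm_sq_mul_norm_fderiv_homogeneousCos {m : ℕ} {s : ℝ} (h : -1 < m + s) :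
    Tendsto (fun z : ℂ => ‖z‖ ^ 2 * ‖fderiv ℝ (homogeneousCos m s) z‖) (𝓝[≠] 0) (𝓝 0) := by
  have hlim : Tendsto (fun z : ℂ => (m + |s|) * ‖z‖ ^ ((m : ℝ) + s + 1)) (𝓝[≠] 0) (𝓝 0) := by
    have := ((tendsto_norm_zero (E := ℂ)).rpow_const (p := (m : ℝ) + s + 1)
      (Or.inr (by linarith))).const_mul ((m : ℝ) + |s|)
    rw [zero_rpow (by linarith), mul_zero] at this
    exact this.mono_left nhdsWithin_le_nhds
  refine squeeze_zero' (.of_forall fun z => by positivity) ?_ hlim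
  filter_upwards [self_mem_nhdsWithin] with z hz
  have hr : 0 < ‖z‖ := norm_pos_iff.2 hz
  calc ‖z‖ ^ 2 * ‖fderiv ℝ (homogeneousCos m s) z‖
      = ‖z‖ * (‖z‖ * ‖fderiv ℝ (homogeneousCos m s) z‖) := by ring
    _ ≤ ‖z‖ * ((m + |s|) * ‖z‖ ^ ((m : ℝ) + s)) := by
        gcongr ‖z‖ * ?_; exact norm_mul_norm_fderiv_homogeneousCos_le hz m s
    _ = (m + |s|) * ‖z‖ ^ ((m : ℝ) + s + 1) := by rw [rpow_add_one hr.ne']; ring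

end Complex

theorem LamE_eq_comp (a : ℝ) (m : ℕ) :
    LamE a m = (fun z : ℂ => ‖z‖ ^ 2 * tanh (Complex.homogeneousCos m (-(m + a)) z)) ∘
      Complex.equivRealProdCLM.symm := by
  ext p
  have hQ : p.1 ^ 2 + p.2 ^ 2 = ‖Complex.equivRealProdCLM.symm p‖ ^ 2 := by
    rw [Complex.sq_norm, Complex.normSq_apply, Complex.equivRealProdCLM_symm_apply_re,
      Complex.equivRealProdCLM_symm_apply_im]
    ring
  rw [LamE, Function.comp_apply, hQ, ← Complex.equivRealProdCLM_symm_apply]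
  split_ifs with hp
  · simp [hp]
  set z := Complex.equivRealProdCLM.symm p
  have hz : z ≠ 0 := (map_ne_zero_iff _ Complex.equivRealProdCLM.symm.injective).2 hp
  have hpow : (‖z‖ ^ 2) ^ (a / 2) = ‖z‖ ^ a := by
    rw [← rpow_natCast, ← rpow_mul (norm_nonneg z)]; ring_nf
  rw [Complex.homogeneousCos_eq hz, hpow, show (m : ℝ) + -(m + a) = -a by ring,
    rpow_neg (norm_nonneg z), div_eq_inv_mul]

theorem LamE_C1_general (a : ℝ) (ha1 : a < 1) (m : ℕ) :
    ContDiff ℝ 1 (LamE a m) ∧ fderiv ℝ (LamE a m) 0 = 0 := by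
  rw [LamE_eq_comp]
  constructor
  · exact (contDiff_norm_sq_mul_tanh (Complex.contDiffOn_homogeneousCos m _)
      (Complex.tendsto_norm_sq_mul_norm_fderiv_homogeneousCos (by linarith))).comp
      Complex.equivRealProdCLM.symm.contDiff
  · rw [ContinuousLinearEquiv.comp_right_fderiv, map_zero,
      (hasFDerivAt_norm_sq_mul_tanh_zero _).fderiv, ContinuousLinearMap.zero_comp]

/-- For `0 < a < 1` and `m ≥ 1`, the extended function `Λ` is `C¹` on all of `ℝ²`,
with vanishing gradient at the origin. -/
theorem LamE_C1 (a : ℝ) (ha0 : 0 < a) (ha1 : a < 1) (m : ℕ) (hm : 1 ≤ m) :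
    ContDiff ℝ 1 (LamE a m) ∧ fderiv ℝ (LamE a m) 0 = 0 :=
  LamE_C1_general a ha1 m
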